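/- arXiv:2508.03049 — 5 statements merged into one kernel-verified Lean document; each statement's English description precedes it below -/
import Mathlib

section
/- Let A ∈ ℝ^{m×m} be symmetric positive definite and B ∈ ℝ^{n×n} be symmetric positive semidefinite. If X ∈ ℝ^{m×n} satisfies A X + X B = 0, then X = 0. -/
open Matrix

namespace Matrix

variable {ι κ R : Type*} [Fintype ι] [Fintype κ] [CommRing R]

theorem trace_transpose_mul_mul (X : Matrix ι κ R) (M : Matrix ι ι R) :
    (Xᵀ * M * X).trace = ∑ j, Xᵀ j ⬝ᵥ M *ᵥ Xᵀ j := by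
  simp only [trace, diag, mul_apply, transpose_apply, dotProduct, mulVec, Finset.sum_mul,
    Finset.mul_sum, mul_assoc]
  exact Finset.sum_congr rfl fun _ _ => Finset.sum_comm

variable [PartialOrder R] [IsOrderedRing R]

theorem trace_transpose_mul_mul_nonneg {M : Matrix ι ι R} (hM : ∀ x, 0 ≤ x ⬝ᵥ M *ᵥ x)
    (X : Matrix ι κ R) : 0 ≤ (Xᵀ * M * X).trace :=
  trace_transpose_mul_mul X M ▸ Finset.sum_nonneg fun j _ => hM (Xᵀ j)

theorem eq_zero_of_trace_transpose_mul_mul_nonpos {M : Matrix ι ι R}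
    (hM : ∀ x, x ≠ 0 → 0 < x ⬝ᵥ M *ᵥ x) {X : Matrix ι κ R}
    (hX : (Xᵀ * M * X).trace ≤ 0) : X = 0 := by
  have hM_nonneg : ∀ x, 0 ≤ x ⬝ᵥ M *ᵥ x := fun x => by
    rcases eq_or_ne x 0 with rfl | hx
    · simp
    · exact (hM x hx).le
  rw [trace_transpose_mul_mul] at hX
  have hcol : ∀ j, Xᵀ j = 0 := fun j => by
    by_contra hj
    have hquad_zero := (Finset.sum_eq_zero_iff_of_nonneg fun j _ => hM_nonneg (Xᵀ j)).mp
      (hX.antisymm (Finset.sum_nonneg fun j _ => hM_nonneg (Xᵀ j))) j (Finset.mem_univ j)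
    exact (hM _ hj).ne' hquad_zero
  exact transpose_eq_zero.mp (funext hcol)

end Matrix

theorem stmt_2_general (m n : ℕ) (A : Matrix (Fin m) (Fin m) ℝ) (B : Matrix (Fin n) (Fin n) ℝ)
    (hApd : ∀ x : Fin m → ℝ, x ≠ 0 → 0 < x ⬝ᵥ A.mulVec x)
    (hBpsd : ∀ x : Fin n → ℝ, 0 ≤ x ⬝ᵥ B.mulVec x)
    (X : Matrix (Fin m) (Fin n) ℝ) (hX : A * X + X * B = 0) :
    X = 0 := by
  -- Multiply the equation by `Xᵀ` on the left and take traces: both terms are nonnegative.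
  have htrace : (Xᵀ * A * X).trace + (Xᵀᵀ * B * Xᵀ).trace = 0 := by
    rw [transpose_transpose, trace_mul_cycle X B, Matrix.mul_assoc Xᵀ X B,
      Matrix.mul_assoc Xᵀ A X, ← trace_add, ← Matrix.mul_add, hX, Matrix.mul_zero, trace_zero]
  exact eq_zero_of_trace_transpose_mul_mul_nonpos hApd <| by
    linarith [trace_transpose_mul_mul_nonneg hBpsd Xᵀ]

/-- If `A` is symmetric positive definite, `B` is symmetric positive semidefinite, and
`A X + X B = 0`, then `X = 0`. -/
theorem stmt_2 (m n : ℕ) (A : Matrix (Fin m) (Fin m) ℝ) (B : Matrix (Fin n) (Fin n) ℝ)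
    (hAsymm : Aᵀ = A) (hApd : ∀ x : Fin m → ℝ, x ≠ 0 → 0 < x ⬝ᵥ A.mulVec x)
    (hBsymm : Bᵀ = B) (hBpsd : ∀ x : Fin n → ℝ, 0 ≤ x ⬝ᵥ B.mulVec x)
    (X : Matrix (Fin m) (Fin n) ℝ) (hX : A * X + X * B = 0) :
    X = 0 :=
  stmt_2_general m n A B hApd hBpsd X hX
end

section
/- Let A ∈ ℝ^{m×m} be symmetric positive definite and B ∈ ℝ^{n×n} be symmetric positive semidefinite. Then for every Q ∈ ℝ^{m×n}, the Sylvester equation A X + X B = Q admits exactly one solution X ∈ ℝ^{m×n}. -/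
/-!
Since `X ↦ A X + X B` is a linear endomorphism of a finite-dimensional space, it suffices to show
that it is injective. If `A X + X B = 0`, then
`0 = tr (Xᵀ (A X + X B)) = ∑ⱼ xⱼᵀ A xⱼ + ∑ᵢ rᵢᵀ B rᵢ`, with `xⱼ` the columns and `rᵢ` the rows
of `X`. Every term is nonnegative, so each `xⱼᵀ A xⱼ` vanishes, and positive definiteness of `A`
forces every column of `X` to be zero.
-/

open Matrix

namespace Matrix

variable {m n R : Type*} [Fintype m] [Fintype n]

section CommRing

variable [CommRing R]

lemma trace_transpose_mul_mul_self (A : Matrix m m R) (X : Matrix m n R) :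
    trace (Xᵀ * (A * X)) = ∑ j, Xᵀ j ⬝ᵥ A *ᵥ Xᵀ j := by
  simp only [trace, diag, mul_apply, dotProduct, mulVec, transpose_apply, Finset.mul_sum]

lemma trace_transpose_mul_self_mul (X : Matrix m n R) (B : Matrix n n R) :
    trace (Xᵀ * (X * B)) = ∑ i, X i ⬝ᵥ B *ᵥ X i := by
  simp only [trace, diag, mul_apply, dotProduct, mulVec, transpose_apply, Finset.mul_sum]
  rw [Finset.sum_comm]
  refine Finset.sum_congr rfl fun i _ => Finset.sum_comm.trans ?_
  exact Finset.sum_congr rfl fun j _ => Finset.sum_congr rfl fun k _ => by ring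

variable (R) in
def sylvesterMap (A : Matrix m m R) (B : Matrix n n R) : Matrix m n R →ₗ[R] Matrix m n R :=
  mulLeftLinearMap n R A + mulRightLinearMap m R B

end CommRing

variable [Field R] [LinearOrder R] [IsStrictOrderedRing R]

lemma eq_zero_of_mul_add_mul_eq_zero {A : Matrix m m R} {B : Matrix n n R}
    (hA : ∀ x, x ≠ 0 → 0 < x ⬝ᵥ A *ᵥ x) (hB : ∀ x, 0 ≤ x ⬝ᵥ B *ᵥ x)
    {X : Matrix m n R} (hX : A * X + X * B = 0) : X = 0 := by
  have hA' : ∀ x, 0 ≤ x ⬝ᵥ A *ᵥ x := fun x => by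
    rcases eq_or_ne x 0 with rfl | hx
    · simp
    · exact (hA x hx).le
  have htrace : (∑ j, Xᵀ j ⬝ᵥ A *ᵥ Xᵀ j) + ∑ i, X i ⬝ᵥ B *ᵥ X i = 0 := by
    rw [← trace_transpose_mul_mul_self, ← trace_transpose_mul_self_mul, ← trace_add,
      ← Matrix.mul_add, hX, Matrix.mul_zero, trace_zero]
  have hcols : ∑ j, Xᵀ j ⬝ᵥ A *ᵥ Xᵀ j = 0 :=
    le_antisymm (htrace ▸ le_add_of_nonneg_right (Finset.sum_nonneg fun i _ => hB _))
      (Finset.sum_nonneg fun j _ => hA' _)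
  have hcol := (Finset.sum_eq_zero_iff_of_nonneg fun j _ => hA' _).mp hcols
  refine transpose_eq_zero.mp (funext fun j => ?_)
  by_contra hj
  exact (hA _ hj).ne' (hcol j (Finset.mem_univ j))

lemma sylvesterMap_bijective {A : Matrix m m R} {B : Matrix n n R}
    (hA : ∀ x, x ≠ 0 → 0 < x ⬝ᵥ A *ᵥ x) (hB : ∀ x, 0 ≤ x ⬝ᵥ B *ᵥ x) :
    Function.Bijective (sylvesterMap R A B) := by
  have hinj : Function.Injective (sylvesterMap R A B) := by
    rw [← LinearMap.ker_eq_bot, LinearMap.ker_eq_bot']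
    exact fun X hX => eq_zero_of_mul_add_mul_eq_zero hA hB hX
  exact ⟨hinj, LinearMap.injective_iff_surjective.mp hinj⟩

end Matrix

theorem stmt_3_general (m n : ℕ) (A : Matrix (Fin m) (Fin m) ℝ) (B : Matrix (Fin n) (Fin n) ℝ)
    (hApd : ∀ x : Fin m → ℝ, x ≠ 0 → 0 < x ⬝ᵥ A.mulVec x)
    (hBpsd : ∀ x : Fin n → ℝ, 0 ≤ x ⬝ᵥ B.mulVec x)
    (Q : Matrix (Fin m) (Fin n) ℝ) :
    ∃! X : Matrix (Fin m) (Fin n) ℝ, A * X + X * B = Q :=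
  (sylvesterMap_bijective hApd hBpsd).existsUnique Q

/-- If `A` is symmetric positive definite and `B` is symmetric positive semidefinite, then
for every `Q` the Sylvester equation `A X + X B = Q` has exactly one solution. -/
theorem stmt_3 (m n : ℕ) (A : Matrix (Fin m) (Fin m) ℝ) (B : Matrix (Fin n) (Fin n) ℝ)
    (hAsymm : Aᵀ = A) (hApd : ∀ x : Fin m → ℝ, x ≠ 0 → 0 < x ⬝ᵥ A.mulVec x)
    (hBsymm : Bᵀ = B) (hBpsd : ∀ x : Fin n → ℝ, 0 ≤ x ⬝ᵥ B.mulVec x)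
    (Q : Matrix (Fin m) (Fin n) ℝ) :
    ∃! X : Matrix (Fin m) (Fin n) ℝ, A * X + X * B = Q :=
  stmt_3_general m n A B hApd hBpsd Q
end

section
/- Assume RᵀR = I_L and μ > 0. If C ∈ ℝ^{L×N} satisfies the Sylvester equation [(F R)ᵀ(F R) + 3μ I_L] C + C (B Sm)(B Sm)ᵀ = (F R)ᵀ Y + Rᵀ X (B Sm)ᵀ + μ Σ_{t=1}^{3} (C + M_t/(2μ)), i.e., the ADMM C-update with each auxiliary variable G_t equal to C, then Rᵀ(R C B Sm − X)(B Sm)ᵀ + (F R)ᵀ(F R C − Y) − (1/2) Σ_{t=1}^{3} M_t = 0. -/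
open Matrix

/-! With every auxiliary variable equal to `C`, the proximal terms `3μ C` appear on both sides
of the Sylvester equation and cancel, leaving the normal equations; `Rᵀ R = I` turns
`Rᵀ (R C H) Hᵀ` into `C H Hᵀ`, so these normal equations are exactly the stationarity
condition. -/

theorem smul_sum_add_inv_two_mul_smul {ι K V : Type*} [Fintype ι] [Field K] [AddCommGroup V]
    [Module K V] {μ : K} (hμ : μ ≠ 0) (C : V) (M : ι → V) :
    μ • ∑ t, (C + (2 * μ)⁻¹ • M t)
      = (1 / 2 : K) • ∑ t, M t + (Fintype.card ι * μ) • C := by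
  have hhalf : μ * (2 * μ)⁻¹ = 1 / 2 := by
    rw [mul_inv, mul_left_comm, mul_inv_cancel₀ hμ, mul_one, one_div]
  rw [Finset.sum_add_distrib, Finset.sum_const, Finset.card_univ, ← Finset.smul_sum, smul_add,
    smul_smul, hhalf, ← Nat.cast_smul_eq_nsmul K, smul_smul, mul_comm, add_comm]

theorem add_smul_one_mul_add_mul_eq_add_smul_iff {m n K : Type*} [Fintype m] [Fintype n]
    [DecidableEq m] [CommRing K] (P : Matrix m m K) (Q : Matrix n n K) (C D : Matrix m n K)
    (c : K) : (P + c • 1) * C + C * Q = D + c • C ↔ P * C + C * Q = D := by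
  rw [Matrix.add_mul, Matrix.smul_mul, Matrix.one_mul, add_right_comm, add_left_inj]

theorem transpose_mul_sub_mul_transpose_add_eq {l m n k p K : Type*} [Fintype l] [Fintype m]
    [Fintype n] [Fintype k] [Fintype p] [DecidableEq m] [CommRing K] {R : Matrix l m K}
    (hR : Rᵀ * R = 1)
    (A : Matrix k m K) (C : Matrix m n K) (H : Matrix n p K) (X : Matrix l p K)
    (Y : Matrix k n K) :
    Rᵀ * (R * C * H - X) * Hᵀ + Aᵀ * (A * C - Y)
      = (Aᵀ * A * C + C * (H * Hᵀ)) - (Aᵀ * Y + Rᵀ * X * Hᵀ) := by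
  have hRC : Rᵀ * (R * C * H) * Hᵀ = C * (H * Hᵀ) := by
    rw [Matrix.mul_assoc R, ← Matrix.mul_assoc Rᵀ, hR, Matrix.one_mul, Matrix.mul_assoc]
  rw [Matrix.mul_sub, Matrix.sub_mul, Matrix.mul_sub, hRC, Matrix.mul_assoc Aᵀ]
  abel

theorem stmt_8_general (L N S s w : ℕ)
    (X : Matrix (Fin S) (Fin w) ℝ) (Y : Matrix (Fin s) (Fin N) ℝ)
    (R : Matrix (Fin S) (Fin L) ℝ) (B : Matrix (Fin N) (Fin N) ℝ)
    (Sm : Matrix (Fin N) (Fin w) ℝ) (F : Matrix (Fin s) (Fin S) ℝ)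
    (M : Fin 3 → Matrix (Fin L) (Fin N) ℝ) (μ : ℝ) (hμ : 0 < μ)
    (hR : Rᵀ * R = 1)
    (C : Matrix (Fin L) (Fin N) ℝ)
    (hC : ((F * R)ᵀ * (F * R) + (3 * μ) • 1) * C + C * ((B * Sm) * (B * Sm)ᵀ)
      = (F * R)ᵀ * Y + Rᵀ * X * (B * Sm)ᵀ + μ • ∑ t : Fin 3, (C + (2 * μ)⁻¹ • M t)) :
    Rᵀ * (R * C * B * Sm - X) * (B * Sm)ᵀ + (F * R)ᵀ * (F * R * C - Y)
      - (1 / 2 : ℝ) • ∑ t : Fin 3, M t = 0 := by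
  have hsum : μ • ∑ t : Fin 3, (C + (2 * μ)⁻¹ • M t)
      = (1 / 2 : ℝ) • ∑ t, M t + (3 * μ) • C := by
    simpa using smul_sum_add_inv_two_mul_smul hμ.ne' C M
  rw [hsum, ← add_assoc, add_smul_one_mul_add_mul_eq_add_smul_iff] at hC
  rw [Matrix.mul_assoc (R * C), transpose_mul_sub_mul_transpose_add_eq hR, hC]
  abel

/-- If `C` satisfies the ADMM C-update Sylvester equation with each auxiliary variable
`G_t` equal to `C`, then the stationarity KKT equation holds:
`Rᵀ(R C B Sm − X)(B Sm)ᵀ + (F R)ᵀ(F R C − Y) − (1/2) Σ_t M_t = 0`. -/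
theorem stmt_8 (L N S s w : ℕ) (hL : 0 < L) (hN : 0 < N) (hS : 0 < S) (hs : 0 < s) (hw : 0 < w)
    (X : Matrix (Fin S) (Fin w) ℝ) (Y : Matrix (Fin s) (Fin N) ℝ)
    (R : Matrix (Fin S) (Fin L) ℝ) (B : Matrix (Fin N) (Fin N) ℝ)
    (Sm : Matrix (Fin N) (Fin w) ℝ) (F : Matrix (Fin s) (Fin S) ℝ)
    (M : Fin 3 → Matrix (Fin L) (Fin N) ℝ) (μ : ℝ) (hμ : 0 < μ)
    (hR : Rᵀ * R = 1)
    (C : Matrix (Fin L) (Fin N) ℝ)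
    (hC : ((F * R)ᵀ * (F * R) + (3 * μ) • 1) * C + C * ((B * Sm) * (B * Sm)ᵀ)
      = (F * R)ᵀ * Y + Rᵀ * X * (B * Sm)ᵀ + μ • ∑ t : Fin 3, (C + (2 * μ)⁻¹ • M t)) :
    Rᵀ * (R * C * B * Sm - X) * (B * Sm)ᵀ + (F * R)ᵀ * (F * R * C - Y)
      - (1 / 2 : ℝ) • ∑ t : Fin 3, M t = 0 :=
  stmt_8_general L N S s w X Y R B Sm F M μ hμ hR C hC
end

section
/- Let a ≥ 0, λ > 0, ε > 0, and define f(x) = (1/2)(x − a)² + λ log(x + ε) for x > −ε. Set c₁ = a − ε and c₂ = c₁² − 4(λ − εa). If c₂ < 0, then f is strictly increasing on [0, ∞), and hence x = 0 is the unique global minimizer of f over [0, ∞). -/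
open Set

/-!
On `(-ε, ∞)` the derivative of `f` is `x - a + λ / (x + ε) = ((x - a)(x + ε) + λ) / (x + ε)`.
The numerator is a monic quadratic in `x` with discriminant exactly `c₂`, so `c₂ < 0` makes it
positive everywhere; hence `f` is strictly increasing on `(-ε, ∞) ⊇ [0, ∞)`.
-/

section LogPenalty

variable {a lam ε : ℝ}

lemma hasDerivAt_half_sq_sub_add_mul_log {x : ℝ} (hx : x + ε ≠ 0) :
    HasDerivAt (fun x => 1 / 2 * (x - a) ^ 2 + lam * Real.log (x + ε))
      (x - a + lam / (x + ε)) x := by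
  have hsq : HasDerivAt (fun x => 1 / 2 * (x - a) ^ 2) (x - a) x :=
    ((((hasDerivAt_id' x).sub_const a).fun_pow 2).const_mul (1 / 2 : ℝ)).congr_deriv (by simp)
  have hlog : HasDerivAt (fun x => lam * Real.log (x + ε)) (lam / (x + ε)) x :=
    ((((hasDerivAt_id' x).add_const ε).log hx).const_mul lam).congr_deriv (by ring)
  exact hsq.add hlog

lemma mul_add_pos_of_discrim_neg (hc₂ : (a - ε) ^ 2 - 4 * (lam - ε * a) < 0) (x : ℝ) :
    0 < (x - a) * (x + ε) + lam := by
  nlinarith [sq_nonneg (2 * x + ε - a)]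

lemma sub_add_div_pos_of_discrim_neg (hc₂ : (a - ε) ^ 2 - 4 * (lam - ε * a) < 0) {x : ℝ}
    (hx : -ε < x) : 0 < x - a + lam / (x + ε) := by
  have hxε : 0 < x + ε := by linarith
  rw [show x - a + lam / (x + ε) = ((x - a) * (x + ε) + lam) / (x + ε) by field_simp]
  exact div_pos (mul_add_pos_of_discrim_neg hc₂ x) hxε

lemma strictMonoOn_half_sq_sub_add_mul_log (hc₂ : (a - ε) ^ 2 - 4 * (lam - ε * a) < 0) :
    StrictMonoOn (fun x => 1 / 2 * (x - a) ^ 2 + lam * Real.log (x + ε)) (Ioi (-ε)) := by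
  have hderiv : ∀ x ∈ Ioi (-ε),
      HasDerivAt (fun x => 1 / 2 * (x - a) ^ 2 + lam * Real.log (x + ε))
        (x - a + lam / (x + ε)) x := fun x hx =>
    hasDerivAt_half_sq_sub_add_mul_log (by linarith [mem_Ioi.mp hx])
  refine strictMonoOn_of_deriv_pos (convex_Ioi _)
    (fun x hx => (hderiv x hx).continuousAt.continuousWithinAt) fun x hx => ?_
  rw [interior_Ioi] at hx
  rw [(hderiv x hx).deriv]
  exact sub_add_div_pos_of_discrim_neg hc₂ hx

end LogPenalty

theorem stmt_12_general (a lam ε : ℝ) (hε : 0 < ε)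
    (f : ℝ → ℝ)
    (hf : ∀ x : ℝ, -ε < x → f x = (1 / 2) * (x - a) ^ 2 + lam * Real.log (x + ε))
    (hc₂ : (a - ε) ^ 2 - 4 * (lam - ε * a) < 0) :
    StrictMonoOn f (Ici 0) ∧ ∀ x : ℝ, 0 ≤ x → x ≠ 0 → f 0 < f x := by
  have hmono : StrictMonoOn f (Ici 0) :=
    ((strictMonoOn_half_sq_sub_add_mul_log hc₂).congr fun x hx => (hf x hx).symm).mono
      (Ici_subset_Ioi.mpr (neg_lt_zero.mpr hε))
  exact ⟨hmono, fun x hx hne => hmono self_mem_Ici hx (lt_of_le_of_ne hx hne.symm)⟩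

/-- For `f(x) = (1/2)(x−a)² + λ log(x+ε)` with `a ≥ 0`, `λ > 0`, `ε > 0`:
if `c₂ = (a−ε)² − 4(λ−εa) < 0`, then `f` is strictly increasing on `[0,∞)` and `x = 0`
is the unique global minimizer of `f` over `[0,∞)`. -/
theorem stmt_12 (a lam ε : ℝ) (ha : 0 ≤ a) (hlam : 0 < lam) (hε : 0 < ε)
    (f : ℝ → ℝ)
    (hf : ∀ x : ℝ, -ε < x → f x = (1 / 2) * (x - a) ^ 2 + lam * Real.log (x + ε))
    (hc₂ : (a - ε) ^ 2 - 4 * (lam - ε * a) < 0) :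
    StrictMonoOn f (Ici 0) ∧ ∀ x : ℝ, 0 ≤ x → x ≠ 0 → f 0 < f x :=
  stmt_12_general a lam ε hε f hf hc₂
end

section
/- Let a ≥ 0, λ > 0, ε > 0, and define f(x) = (1/2)(x − a)² + λ log(x + ε) for x > −ε. Set c₁ = a − ε and c₂ = c₁² − 4(λ − εa). If c₂ > 0, then f attains its global minimum over [0, ∞), and its minimum value equals min(f(0), f(x₀)) where x₀ = max(0, (c₁ + √c₂)/2); in particular, every global minimizer of f on [0, ∞) belongs to {0, x₀}. -/
open Set

/-!
`f'(x) = (x - a) + λ / (x + ε) = (x - r₁)(x - r₂) / (x + ε)`, where `r₁ ≤ r₂ = (c₁ ± √c₂) / 2`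
are the roots of `x² - c₁ x + (λ - ε a)`. Both roots exceed `-ε`, since `r₂ + ε > 0` (as `a ≥ 0`) and
`(r₁ + ε)(r₂ + ε) = λ > 0`. Hence `f` increases up to `r₁`, decreases on `[r₁, r₂]` and increases
after `r₂`, so on `[0, ∞)` every point other than `0` and `max 0 r₂ = x₀` has a value strictly
larger than `min (f 0) (f x₀)`.
-/

section Order

variable {α β : Type*} [LinearOrder α] [LinearOrder β]

theorem min_lt_of_strictMonoOn_of_strictAntiOn_of_strictMonoOn {f : α → β} {b r₁ r₂ y : α}
    (h₁ : StrictMonoOn f (Icc b r₁)) (h₂ : StrictAntiOn f (Icc r₁ r₂))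
    (h₃ : StrictMonoOn f (Ici r₂)) (hby : b ≤ y) (hyb : y ≠ b) (hyr : y ≠ max b r₂) :
    min (f b) (f (max b r₂)) < f y := by
  rcases le_or_gt r₂ y with hr₂y | hyr₂
  · have hlt : max b r₂ < y := lt_of_le_of_ne (max_le hby hr₂y) (Ne.symm hyr)
    exact (min_le_right _ _).trans_lt <|
      h₃ (le_max_right b r₂) (le_max_right b r₂ |>.trans hlt.le) hlt
  rcases le_or_gt r₁ y with hr₁y | hyr₁
  · rw [max_eq_right (hby.trans hyr₂.le)]
    exact (min_le_right _ _).trans_lt <|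
      h₂ ⟨hr₁y, hyr₂.le⟩ ⟨hr₁y.trans hyr₂.le, le_rfl⟩ hyr₂
  · have hlt : b < y := lt_of_le_of_ne hby (Ne.symm hyb)
    exact (min_le_left _ _).trans_lt <|
      h₁ ⟨le_rfl, hlt.le.trans hyr₁.le⟩ ⟨hby, hyr₁.le⟩ hlt

theorem exists_minimizer_and_eq_or_eq_of_min_lt {f : α → β} {s : Set α} {p q : α}
    (hp : p ∈ s) (hq : q ∈ s)
    (h : ∀ y ∈ s, y ≠ p → y ≠ q → min (f p) (f q) < f y) :
    (∃ x ∈ s, (∀ y ∈ s, f x ≤ f y) ∧ f x = min (f p) (f q)) ∧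
      ∀ x ∈ s, (∀ y ∈ s, f x ≤ f y) → x = p ∨ x = q := by
  have hmin : ∀ y ∈ s, min (f p) (f q) ≤ f y := fun y hy ↦ by
    by_cases hyp : y = p
    · exact hyp ▸ min_le_left _ _
    by_cases hyq : y = q
    · exact hyq ▸ min_le_right _ _
    exact (h y hy hyp hyq).le
  refine ⟨?_, fun x hx hxmin ↦ ?_⟩
  · rcases min_choice (f p) (f q) with hm | hm
    · exact ⟨p, hp, fun y hy ↦ hm ▸ hmin y hy, hm.symm⟩
    · exact ⟨q, hq, fun y hy ↦ hm ▸ hmin y hy, hm.symm⟩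
  · by_contra! hne
    have hfx := h x hx hne.1 hne.2
    rcases min_choice (f p) (f q) with hm | hm
    · exact (hxmin p hp).not_gt (hm ▸ hfx)
    · exact (hxmin q hq).not_gt (hm ▸ hfx)

end Order

section Monotonicity

variable {f f' : ℝ → ℝ} {D : Set ℝ}

theorem strictMonoOn_of_hasDerivAt_pos (hD : Convex ℝ D) (hf : ∀ x ∈ D, HasDerivAt f (f' x) x)
    (hpos : ∀ x ∈ interior D, 0 < f' x) : StrictMonoOn f D :=
  strictMonoOn_of_hasDerivWithinAt_pos hD (fun x hx ↦ (hf x hx).continuousAt.continuousWithinAt)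
    (fun x hx ↦ (hf x (interior_subset hx)).hasDerivWithinAt) hpos

theorem strictAntiOn_of_hasDerivAt_neg (hD : Convex ℝ D) (hf : ∀ x ∈ D, HasDerivAt f (f' x) x)
    (hneg : ∀ x ∈ interior D, f' x < 0) : StrictAntiOn f D :=
  strictAntiOn_of_hasDerivWithinAt_neg hD (fun x hx ↦ (hf x hx).continuousAt.continuousWithinAt)
    (fun x hx ↦ (hf x (interior_subset hx)).hasDerivWithinAt) hneg

variable {ε r₁ r₂ : ℝ} (hf : ∀ x, -ε < x → HasDerivAt f ((x - r₁) * (x - r₂) / (x + ε)) x)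
include hf

theorem strictMonoOn_Icc_of_le_left_root {b : ℝ} (hb : -ε < b) (h₁₂ : r₁ ≤ r₂) :
    StrictMonoOn f (Icc b r₁) := by
  refine strictMonoOn_of_hasDerivAt_pos (convex_Icc b r₁) (fun x hx ↦ hf x (hb.trans_le hx.1))
    fun x hx ↦ ?_
  rw [interior_Icc] at hx
  exact div_pos (mul_pos_of_neg_of_neg (by linarith [hx.2]) (by linarith [hx.2]))
    (by linarith [hx.1])

theorem strictAntiOn_Icc_roots (h₁ : -ε < r₁) : StrictAntiOn f (Icc r₁ r₂) := by
  refine strictAntiOn_of_hasDerivAt_neg (convex_Icc r₁ r₂) (fun x hx ↦ hf x (h₁.trans_le hx.1))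
    fun x hx ↦ ?_
  rw [interior_Icc] at hx
  exact div_neg_of_neg_of_pos (mul_neg_of_pos_of_neg (by linarith [hx.1]) (by linarith [hx.2]))
    (by linarith [hx.1])

theorem strictMonoOn_Ici_right_root (h₂ : -ε < r₂) (h₁₂ : r₁ ≤ r₂) :
    StrictMonoOn f (Ici r₂) := by
  refine strictMonoOn_of_hasDerivAt_pos (convex_Ici r₂) (fun x hx ↦ hf x (h₂.trans_le hx))
    fun x hx ↦ ?_
  rw [interior_Ici] at hx
  exact div_pos (mul_pos (by linarith [mem_Ioi.1 hx]) (by linarith [mem_Ioi.1 hx]))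
    (by linarith [mem_Ioi.1 hx])

end Monotonicity

theorem hasDerivAt_of_eq_half_sq_add_log {f : ℝ → ℝ} {a lam ε r₁ r₂ x : ℝ}
    (hf : ∀ x : ℝ, -ε < x → f x = (1 / 2) * (x - a) ^ 2 + lam * Real.log (x + ε))
    (hsum : r₁ + r₂ = a - ε) (hprod : r₁ * r₂ = lam - ε * a) (hx : -ε < x) :
    HasDerivAt f ((x - r₁) * (x - r₂) / (x + ε)) x := by
  have hxε : x + ε ≠ 0 := by linarith
  have hd : HasDerivAt (fun y ↦ 1 / 2 * (y - a) ^ 2 + lam * Real.log (y + ε))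
      (x - a + lam / (x + ε)) x :=
    ((((hasDerivAt_id' x).sub_const a).pow 2).const_mul (1 / 2 : ℝ) |>.add
      ((((hasDerivAt_id' x).add_const ε).log hxε).const_mul lam)).congr_deriv (by ring)
  have hval : x - a + lam / (x + ε) = (x - r₁) * (x - r₂) / (x + ε) := by
    field_simp
    linear_combination -hprod + x * hsum
  rw [← hval]
  exact hd.congr_of_eventuallyEq <| Filter.eventually_of_mem (Ioi_mem_nhds hx) fun y hy ↦ hf y hy

/-- For `f(x) = (1/2)(x−a)² + λ log(x+ε)` with `a ≥ 0`, `λ > 0`, `ε > 0`: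
if `c₂ = (a−ε)² − 4(λ−εa) > 0`, then `f` attains its global minimum over `[0,∞)`, its
minimum value equals `min (f 0) (f x₀)` with `x₀ = max 0 ((c₁+√c₂)/2)`, and every global
minimizer of `f` on `[0,∞)` belongs to `{0, x₀}`. -/
theorem stmt_14 (a lam ε : ℝ) (ha : 0 ≤ a) (hlam : 0 < lam) (hε : 0 < ε)
    (f : ℝ → ℝ)
    (hf : ∀ x : ℝ, -ε < x → f x = (1 / 2) * (x - a) ^ 2 + lam * Real.log (x + ε))
    (hc₂ : 0 < (a - ε) ^ 2 - 4 * (lam - ε * a))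
    (x₀ : ℝ)
    (hx₀ : x₀ = max 0 (((a - ε) + Real.sqrt ((a - ε) ^ 2 - 4 * (lam - ε * a))) / 2)) :
    (∃ x : ℝ, 0 ≤ x ∧ (∀ y : ℝ, 0 ≤ y → f x ≤ f y) ∧ f x = min (f 0) (f x₀)) ∧
    (∀ x : ℝ, 0 ≤ x → (∀ y : ℝ, 0 ≤ y → f x ≤ f y) → x = 0 ∨ x = x₀) := by
  set s := Real.sqrt ((a - ε) ^ 2 - 4 * (lam - ε * a))
  have hs : 0 ≤ s := Real.sqrt_nonneg _
  have hs2 : s ^ 2 = (a - ε) ^ 2 - 4 * (lam - ε * a) := Real.sq_sqrt hc₂.le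
  set r₁ := ((a - ε) - s) / 2 with hr₁_def
  set r₂ := ((a - ε) + s) / 2 with hr₂_def
  have h₁₂ : r₁ ≤ r₂ := by linarith
  have hr₂ : -ε < r₂ := by linarith
  have hprod : r₁ * r₂ = lam - ε * a := by linear_combination -hs2 / 4
  have hr₁ : -ε < r₁ := by nlinarith [show (r₁ + ε) * (r₂ + ε) = lam by linear_combination hprod]
  have hsum : r₁ + r₂ = a - ε := by ring
  have hderiv := fun x (hx : -ε < x) ↦ hasDerivAt_of_eq_half_sq_add_log hf hsum hprod hx
  have hx₀r₂ : x₀ = max 0 r₂ := hx₀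
  subst hx₀r₂
  refine exists_minimizer_and_eq_or_eq_of_min_lt (s := Ici 0) self_mem_Ici (le_max_left 0 r₂)
    fun y hy hy0 hyx₀ ↦ ?_
  exact min_lt_of_strictMonoOn_of_strictAntiOn_of_strictMonoOn
    (strictMonoOn_Icc_of_le_left_root hderiv (neg_lt_zero.2 hε) h₁₂)
    (strictAntiOn_Icc_roots hderiv hr₁) (strictMonoOn_Ici_right_root hderiv hr₂ h₁₂) hy hy0 hyx₀
end
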